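/- Let n ≥ 3 and fix distinct indices j, k ∈ {1,…,n}. Suppose the data a₁,…,a_n ∈ ℝ, x_{kj} ∈ ℝ, and x_{ji}, x_{ki}, x_{kji} ∈ ℝ for all i ∉ {j,k}, satisfy x_{kj}² − 4 < 0 and ψ(x_{kj}, a_k, a_j) ≠ 0, and fix r ∈ ℂ with r² = x_{kj}² − 4. Let (M₁,…,M_n) be the associated normal-form tuple. Then for every s = 1,…,n one has conj((M_s)₁₁) = (M_s)₂₂ and (M_s)₁₂ · (x_{kj}² − 4) = −ψ(x_{kj}, a_k, a_j) · conj((M_s)₂₁). -/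

import Mathlib

open Matrix

/-- `ψ(s,t,u) = s² + t² + u² − stu − 4` (complex version). -/
noncomputable def psi (s t u : ℂ) : ℂ := s ^ 2 + t ^ 2 + u ^ 2 - s * t * u - 4

/-- `ψ(s,t,u) = s² + t² + u² − stu − 4` (real version). -/
noncomputable def psiR (s t u : ℝ) : ℝ := s ^ 2 + t ^ 2 + u ^ 2 - s * t * u - 4

/-- The normal-form tuple `(M₁,…,Mₙ)` associated to the data
`(a_s)`, `(x_{ji})`, `(x_{ki})`, `(x_{kji})`, `x_{kj}` and a square root `r` of
`x_{kj}² − 4`, with `λ₊ = (x_{kj}+r)/2`, `λ₋ = (x_{kj}−r)/2`. -/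
noncomputable def normalForm {n : ℕ} (j k : Fin n) (a xji xki xkji : Fin n → ℂ)
    (xkj r : ℂ) : Fin n → Matrix (Fin 2) (Fin 2) ℂ := fun s =>
  let lp : ℂ := (xkj + r) / 2
  let lm : ℂ := (xkj - r) / 2
  if s = j then
    !![-(a k - lp * a j) / r, -psi xkj (a k) (a j) / r ^ 2;
       1, (a k - lm * a j) / r]
  else if s = k then
    !![-(a j - lp * a k) / r, lp * psi xkj (a k) (a j) / r ^ 2;
       -lm, (a j - lm * a k) / r]
  else
    let u11 := (xkji s - lm * a s) / r
    let u22 := -(xkji s - lp * a s) / r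
    !![u11, (xki s - a k * u22 + lp * (xji s - a j * u11)) / r;
       r * (xki s - a k * u11 + lm * (xji s - a j * u22)) / psi xkj (a k) (a j), u22]

set_option maxHeartbeats 1000000 in
/-- Symmetry of the normal-form entries for real data with `x_{kj}² − 4 < 0`:
`conj((M_s)₁₁) = (M_s)₂₂` and `(M_s)₁₂ (x_{kj}² − 4) = −ψ(x_{kj},a_k,a_j) conj((M_s)₂₁)`. -/
theorem normal_form_entry_symmetry (n : ℕ) (hn : 3 ≤ n)
    (j k : Fin n) (hjk : j ≠ k)
    (a xji xki xkji : Fin n → ℝ) (xkj : ℝ)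
    (h4 : xkj ^ 2 - 4 < 0) (hpsi : psiR xkj (a k) (a j) ≠ 0)
    (r : ℂ) (hr : r ^ 2 = (xkj : ℂ) ^ 2 - 4)
    (M : Fin n → Matrix (Fin 2) (Fin 2) ℂ)
    (hMdef : M = normalForm j k (fun s => ((a s : ℂ))) (fun i => ((xji i : ℂ)))
      (fun i => ((xki i : ℂ))) (fun i => ((xkji i : ℂ))) (xkj : ℂ) r) :
    ∀ s, starRingEnd ℂ (M s 0 0) = M s 1 1 ∧
      M s 0 1 * ((xkj : ℂ) ^ 2 - 4) =
        -((psiR xkj (a k) (a j) : ℝ) : ℂ) * starRingEnd ℂ (M s 1 0) := by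
  have hr2ne : ((xkj : ℂ) ^ 2 - 4) ≠ 0 := by
    have : ((xkj ^ 2 - 4 : ℝ) : ℂ) ≠ 0 := by
      exact_mod_cast h4.ne
    push_cast at this
    exact this
  have hr0 : r ≠ 0 := by
    intro h
    rw [h] at hr
    exact hr2ne (by simpa using hr.symm)
  have hcr : starRingEnd ℂ r = -r := by
    have h1 : (starRingEnd ℂ r) ^ 2 = r ^ 2 := by
      rw [← map_pow, hr]
      simp [map_sub, map_pow, Complex.conj_ofReal, map_ofNat]
    have h2 : (starRingEnd ℂ r - r) * (starRingEnd ℂ r + r) = 0 := by ring_nf; linear_combination h1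
    rcases mul_eq_zero.mp h2 with h | h
    · exfalso
      have hre : r = (r.re : ℂ) := by
        have := sub_eq_zero.mp h
        have him : r.im = 0 := by
          have := congrArg Complex.im this
          simp at this
          linarith
        exact (Complex.ext (by simp) (by simp [him])).symm
      rw [hre] at hr
      have : ((r.re ^ 2 : ℝ) : ℂ) = ((xkj ^ 2 - 4 : ℝ) : ℂ) := by push_cast; exact hr
      have h3 : (r.re : ℝ) ^ 2 = xkj ^ 2 - 4 := by exact_mod_cast this
      nlinarith [sq_nonneg r.re]
    · exact eq_neg_of_add_eq_zero_left h
  have hpsic : psi (xkj : ℂ) ((a k : ℂ)) ((a j : ℂ)) = ((psiR xkj (a k) (a j) : ℝ) : ℂ) := by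
    unfold psi psiR; push_cast; ring
  have hpsic0 : psi (xkj : ℂ) ((a k : ℂ)) ((a j : ℂ)) ≠ 0 := by
    rw [hpsic]; exact_mod_cast hpsi
  subst hMdef
  intro s
  by_cases hsj : s = j
  · constructor
    · simp [normalForm, hsj, Complex.conj_ofReal, hcr, map_ofNat, map_div₀, hpsic]
      field_simp; ring
    · simp [normalForm, hsj, Complex.conj_ofReal, hcr, map_ofNat, map_div₀, hpsic]
      rw [← hpsic, ← hr]; field_simp
  · by_cases hsk : s = k
    · constructor
      · simp [normalForm, hsj, hsk, Ne.symm hjk, Complex.conj_ofReal, hcr, map_ofNat, map_div₀, hpsic]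
        field_simp; ring
      · simp [normalForm, hsj, hsk, Ne.symm hjk, Complex.conj_ofReal, hcr, map_ofNat, map_div₀, hpsic]
        rw [← hpsic, ← hr]; field_simp
    · constructor
      · simp [normalForm, hsj, hsk, Ne.symm hjk, Complex.conj_ofReal, hcr, map_ofNat, map_div₀, hpsic]
        field_simp; ring
      · simp [normalForm, hsj, hsk, Ne.symm hjk, Complex.conj_ofReal, hcr, map_ofNat, map_div₀, hpsic]
        rw [← hpsic, ← hr]
        rw [div_mul_eq_mul_div, div_eq_iff hr0,
          mul_comm (psi (xkj:ℂ) ((a k : ℝ):ℂ) ((a j : ℝ):ℂ)), div_mul_cancel₀ _ hpsic0]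
        field_simp
        ring
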